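/- Let k, l, n be natural numbers with l ≤ n and m = k + l. Let D be an m × n integer matrix whose first k rows are zero and whose remaining entries are D_{(k+t), t} = d_t for 0 ≤ t < l with each d_t a nonzero integer, all other entries of D being zero. If W is an m × m integer matrix satisfying W · D = D and det W = 1, then the top-left k × k block M of W (the submatrix of W on the first k rows and first k columns) satisfies det M = 1. -/

import Mathlib

/-!
Column `t` of `D` is `d t` times the standard basis vector `e_{k+t}`, so `W * D = D`
and `d t ≠ 0` force column `k + t` of `W` to be `e_{k+t}`. Hence `W` is block lower triangular
with identity bottom-right block, and `det W` equals the determinant of its top-left block.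
-/

namespace Matrix

variable {m n R : Type*} [Fintype m]

theorem mul_apply_eq_of_col_single [NonUnitalNonAssocSemiring R] (M : Matrix m m R)
    {D : Matrix m n R} {a : m} {j : n} (hD : ∀ i, i ≠ a → D i j = 0) (i : m) :
    (M * D) i j = M i a * D a j := by
  rw [mul_apply, Finset.sum_eq_single a (fun x _ hx => by rw [hD x hx, mul_zero])
    (fun ha => absurd (Finset.mem_univ a) ha)]

theorem apply_eq_one_apply_of_mul_eq_self [DecidableEq m] [Semiring R] [IsRightCancelMulZero R]
    {W : Matrix m m R} {D : Matrix m n R} (hW : W * D = D) {a : m} {j : n}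
    (hD : ∀ i, i ≠ a → D i j = 0) (ha : D a j ≠ 0) (i : m) :
    W i a = (1 : Matrix m m R) i a := by
  have h := congrFun (congrFun (hW.trans (Matrix.one_mul D).symm) i) j
  rw [mul_apply_eq_of_col_single W hD, mul_apply_eq_of_col_single 1 hD] at h
  exact mul_right_cancel₀ ha h

theorem det_eq_det_toBlocks₁₁ [Fintype n] [DecidableEq m] [DecidableEq n] [CommRing R]
    (W : Matrix (m ⊕ n) (m ⊕ n) R) (h₁₂ : W.toBlocks₁₂ = 0) (h₂₂ : W.toBlocks₂₂ = 1) :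
    W.det = W.toBlocks₁₁.det := by
  rw [← fromBlocks_toBlocks W, h₁₂, h₂₂, det_fromBlocks_zero₁₂, det_one, mul_one]
  rfl

end Matrix

open Matrix in
/-- If `D` is an `(k+l) × n` integer matrix in Smith-normal-form shape (first `k` rows zero,
then nonzero invariant factors `d t` at positions `(k+t, t)`, all other entries zero) and
`W` satisfies `W * D = D` with `det W = 1`, then the top-left `k × k` block of `W`
has determinant `1`. -/
theorem det_topLeft_block_eq_one (k l n : ℕ) (hl : l ≤ n)
    (d : Fin l → ℤ) (hd : ∀ t, d t ≠ 0)
    (D : Matrix (Fin (k + l)) (Fin n) ℤ)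
    (hD1 : ∀ t : Fin l,
      D ⟨k + t, Nat.add_lt_add_left t.isLt k⟩ ⟨t, lt_of_lt_of_le t.isLt hl⟩ = d t)
    (hD0 : ∀ (i : Fin (k + l)) (j : Fin n),
      ¬((i : ℕ) = k + (j : ℕ) ∧ (j : ℕ) < l) → D i j = 0)
    (W : Matrix (Fin (k + l)) (Fin (k + l)) ℤ)
    (hW : W * D = D) (hdetW : W.det = 1) :
    (W.submatrix (Fin.castAdd l) (Fin.castAdd l)).det = 1 := by
  have hcol (i : Fin (k + l)) (t : Fin l) :
      W i (Fin.natAdd k t) = (1 : Matrix (Fin (k + l)) (Fin (k + l)) ℤ) i (Fin.natAdd k t) :=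
    apply_eq_one_apply_of_mul_eq_self hW (j := ⟨t, lt_of_lt_of_le t.isLt hl⟩)
      (fun i hi => hD0 i _ fun h => hi (Fin.ext h.1)) (hD1 t ▸ hd t) i
  set W' := W.submatrix (finSumFinEquiv (m := k) (n := l)) finSumFinEquiv
  have h₁₂ : W'.toBlocks₁₂ = 0 := by
    ext i t
    have hne : (i : ℕ) ≠ k + t := by omega
    simpa [W', toBlocks₁₂, one_apply, Fin.ext_iff, hne] using hcol (Fin.castAdd l i) t
  have h₂₂ : W'.toBlocks₂₂ = 1 := by
    ext s t
    simpa [W', toBlocks₂₂, one_apply, Fin.ext_iff] using hcol (Fin.natAdd k s) t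
  rw [← hdetW, ← det_submatrix_equiv_self finSumFinEquiv, det_eq_det_toBlocks₁₁ W' h₁₂ h₂₂]
  rfl
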